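/- Under the stated assumptions, the true period P of Rayleigh's stretched string satisfies the lower bound P ≥ 2π/√(2T/(mL) + σ·y₀²/(m·L₀·L²)). -/

import Mathlib

open Real MeasureTheory intervalIntegral

/-!
The factor `1/L₀ - 2/(√(L² + y²) + √(L² + y₀²))` under the second square root increases with `y`,
so on `[0, y₀]` it is at most its value `1/L₀ - 1/√(L² + y₀²)` at `y₀`. What remains is the
arcsine integral `∫₀^y₀ dy / √(y₀² - y²) = π/2`, whence `P ≥ 2π / √(2σ/m · (1/L₀ - 1/√(L² + y₀²)))`.
The tangent-line bound `1/L - 1/√(L² + y₀²) ≤ y₀²/(2L³) ≤ y₀²/(2L₀L²)` then compares this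
frequency with the one in the statement.
-/

theorem hasDerivAt_arcsin_div {c y : ℝ} (hy : y ∈ Set.Ioo (-c) c) :
    HasDerivAt (fun y => arcsin (y / c)) (1 / √(c ^ 2 - y ^ 2)) y := by
  obtain ⟨hlo, hhi⟩ := hy
  have hc : 0 < c := by linarith
  have hne₁ : y / c ≠ -1 := by
    rw [ne_eq, div_eq_iff hc.ne']; linarith
  have hne₂ : y / c ≠ 1 := by
    rw [ne_eq, div_eq_iff hc.ne']; linarith
  have hsq : 1 - (y / c) ^ 2 = (c ^ 2 - y ^ 2) / c ^ 2 := by field_simp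
  have hdiv : HasDerivAt (fun y => y / c) (1 / c) y := (hasDerivAt_id y).div_const c
  refine ((hasDerivAt_arcsin hne₁ hne₂).comp y hdiv).congr_deriv ?_
  have hpos : 0 < √(c ^ 2 - y ^ 2) := sqrt_pos.2 (by nlinarith)
  rw [hsq, sqrt_div' _ (sq_nonneg c), sqrt_sq hc.le]
  field_simp

theorem intervalIntegrable_one_div_sqrt_sq_sub_sq {c : ℝ} (hc : 0 ≤ c) :
    IntervalIntegrable (fun y => 1 / √(c ^ 2 - y ^ 2)) volume 0 c := by
  refine intervalIntegrable_deriv_of_nonneg (g := fun y => arcsin (y / c))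
    (by fun_prop) (fun y hy => hasDerivAt_arcsin_div ?_) (fun y _ => by positivity)
  rw [min_eq_left hc, max_eq_right hc] at hy
  exact ⟨by linarith [hy.1], hy.2⟩

theorem integral_one_div_sqrt_sq_sub_sq {c : ℝ} (hc : 0 < c) :
    ∫ y in (0 : ℝ)..c, 1 / √(c ^ 2 - y ^ 2) = π / 2 := by
  rw [integral_eq_sub_of_hasDerivAt_of_le hc.le (f := fun y => arcsin (y / c)) (by fun_prop)
    (fun y hy => hasDerivAt_arcsin_div ⟨by linarith [hy.1], hy.2⟩)
    (intervalIntegrable_one_div_sqrt_sq_sub_sq hc.le)]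
  simp [hc.ne']

theorem pi_div_two_div_sqrt_le_integral {c : ℝ} {φ : ℝ → ℝ} (hc : 0 < c)
    (hφ : MonotoneOn φ (Set.Icc 0 c)) (hφ₀ : 0 < φ 0) :
    π / 2 / √(φ c) ≤ ∫ y in (0 : ℝ)..c, 1 / (√(c ^ 2 - y ^ 2) * √(φ y)) := by
  set w : ℝ → ℝ := fun y => 1 / √(c ^ 2 - y ^ 2)
  set g : ℝ → ℝ := fun y => 1 / (√(c ^ 2 - y ^ 2) * √(φ y))
  have hw : IntervalIntegrable w volume 0 c := intervalIntegrable_one_div_sqrt_sq_sub_sq hc.le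
  have hg_eq : ∀ y, g y = (√(φ y))⁻¹ * w y := fun y => by
    simp only [g, w]; rw [mul_comm, ← one_div_mul_one_div, one_div]
  have hg_le : ∀ y ∈ Set.Icc 0 c, g y ≤ (√(φ 0))⁻¹ * w y := fun y hy => by
    rw [hg_eq]; gcongr; exact hφ ⟨le_rfl, hc.le⟩ hy hy.1
  have hle_g : ∀ y ∈ Set.Icc 0 c, (√(φ c))⁻¹ * w y ≤ g y := fun y hy => by
    rw [hg_eq]
    gcongr
    · exact sqrt_pos.2 (hφ₀.trans_le (hφ ⟨le_rfl, hc.le⟩ hy hy.1))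
    · exact hφ hy ⟨hc.le, le_rfl⟩ hy.2
  have hg_meas : AEStronglyMeasurable g (volume.restrict (Set.uIoc 0 c)) := by
    rw [Set.uIoc_of_le hc.le]
    have hφm : AEMeasurable φ (volume.restrict (Set.Ioc 0 c)) :=
      (aemeasurable_restrict_of_monotoneOn measurableSet_Icc hφ).mono_measure
        (Measure.restrict_mono Set.Ioc_subset_Icc_self le_rfl)
    refine (aemeasurable_const.div (AEMeasurable.mul ?_ hφm.sqrt)).aestronglyMeasurable
    fun_prop
  -- `φ ≥ φ 0 > 0` dominates the integrand by a multiple of the arcsine density.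
  have hg : IntervalIntegrable g volume 0 c := by
    refine (hw.const_mul (√(φ 0))⁻¹).mono_fun hg_meas ?_
    filter_upwards [ae_restrict_mem measurableSet_uIoc] with y hy
    rw [Set.uIoc_of_le hc.le] at hy
    rw [norm_of_nonneg (by positivity), norm_of_nonneg (by positivity)]
    exact hg_le y (Set.Ioc_subset_Icc_self hy)
  calc π / 2 / √(φ c) = ∫ y in (0 : ℝ)..c, (√(φ c))⁻¹ * w y := by
        rw [intervalIntegral.integral_const_mul, integral_one_div_sqrt_sq_sub_sq hc,
          div_eq_inv_mul]
    _ ≤ ∫ y in (0 : ℝ)..c, g y := integral_mono_on hc.le (hw.const_mul _) hg hle_g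

theorem inv_sub_inv_sqrt_sq_add_sq_le {L : ℝ} (hL : 0 < L) (y : ℝ) :
    L⁻¹ - (√(L ^ 2 + y ^ 2))⁻¹ ≤ y ^ 2 / (2 * L ^ 3) := by
  set s := √(L ^ 2 + y ^ 2)
  have hs_sq : s ^ 2 = L ^ 2 + y ^ 2 := sq_sqrt (by positivity)
  have hLs : L ≤ s := le_sqrt_of_sq_le (by nlinarith)
  rw [inv_sub_inv hL.ne' (by positivity), div_le_div_iff₀ (by positivity) (by positivity)]
  have h₁ : 0 ≤ s - L := by linarith
  have h₂ : 0 ≤ L * s * (s + L) - 2 * L ^ 3 := by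
    nlinarith [mul_le_mul hLs hLs hL.le (by linarith)]
  have hy : y ^ 2 = s ^ 2 - L ^ 2 := by linarith
  rw [hy]
  nlinarith [mul_nonneg h₁ h₂]

theorem rayleigh_frequency_sq_le {σ m L₀ L y₀ : ℝ} (hσ : 0 < σ) (hm : 0 < m) (hL₀ : 0 < L₀)
    (hLL : L₀ ≤ L) :
    2 * σ / m * (L₀⁻¹ - (√(L ^ 2 + y₀ ^ 2))⁻¹) ≤
      2 * (σ * (L - L₀) / L₀) / (m * L) + σ * y₀ ^ 2 / (m * L₀ * L ^ 2) := by
  have hL : 0 < L := hL₀.trans_le hLL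
  have hrhs : 2 * (σ * (L - L₀) / L₀) / (m * L) + σ * y₀ ^ 2 / (m * L₀ * L ^ 2) =
      2 * σ / m * ((L₀⁻¹ - L⁻¹) + y₀ ^ 2 / (2 * L₀ * L ^ 2)) := by
    field_simp
  have hy : y₀ ^ 2 / (2 * L ^ 3) ≤ y₀ ^ 2 / (2 * L₀ * L ^ 2) := by
    refine div_le_div_of_nonneg_left (sq_nonneg _) (by positivity) ?_
    nlinarith [mul_le_mul_of_nonneg_right hLL (sq_nonneg L)]
  rw [hrhs]
  gcongr
  linarith [inv_sub_inv_sqrt_sq_add_sq_le hL y₀]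

theorem four_mul_sqrt_mul_pi_div_two_div_sqrt {σ m A : ℝ} (hσ : 0 < σ) (hm : 0 < m)
    (hA : 0 < A) :
    4 * √(m / (2 * σ)) * (π / 2 / √A) = 2 * π / √(2 * σ / m * A) := by
  rw [sqrt_mul (by positivity), ← inv_div, sqrt_inv]
  field_simp
  ring

theorem rayleigh_period_lower_bound
    (σ m L₀ L y₀ T P : ℝ)
    (hσ : 0 < σ) (hm : 0 < m) (hL₀ : 0 < L₀) (hL : 0 < L) (hy₀ : 0 < y₀)
    (hLL : L₀ < L)
    (hT : T = σ * (L - L₀) / L₀)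
    (hP : P = 4 * Real.sqrt (m / (2 * σ)) *
      ∫ y in (0:ℝ)..y₀,
        1 / (Real.sqrt (y₀ ^ 2 - y ^ 2) *
          Real.sqrt (1 / L₀ -
            2 / (Real.sqrt (L ^ 2 + y ^ 2) + Real.sqrt (L ^ 2 + y₀ ^ 2))))) :
    2 * Real.pi / Real.sqrt (2 * T / (m * L) + σ * y₀ ^ 2 / (m * L₀ * L ^ 2)) ≤ P := by
  subst hT hP
  set s := √(L ^ 2 + y₀ ^ 2)
  set f : ℝ → ℝ := fun y => 1 / L₀ - 2 / (√(L ^ 2 + y ^ 2) + s)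
  have hLs : L ≤ s := le_sqrt_of_sq_le (le_add_of_nonneg_right (sq_nonneg y₀))
  have hf_mono : MonotoneOn f (Set.Icc 0 y₀) := fun a ha b _ hab => by
    simp only [f]
    gcongr
    exact ha.1
  have hf₀ : 0 < f 0 := by
    have : 2 / (L + s) < 1 / L₀ := by
      rw [div_lt_div_iff₀ (by positivity) hL₀]; linarith
    simpa [f, sqrt_sq hL.le] using this
  have hf_y₀ : f y₀ = L₀⁻¹ - s⁻¹ := by
    simp only [f]; rw [← two_mul, div_mul_cancel_left₀ two_ne_zero, one_div]
  have hA : 0 < L₀⁻¹ - s⁻¹ :=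
    hf_y₀ ▸ hf₀.trans_le (hf_mono ⟨le_rfl, hy₀.le⟩ ⟨hy₀.le, le_rfl⟩ hy₀.le)
  calc 2 * π / √(2 * (σ * (L - L₀) / L₀) / (m * L) + σ * y₀ ^ 2 / (m * L₀ * L ^ 2))
      ≤ 2 * π / √(2 * σ / m * (L₀⁻¹ - s⁻¹)) :=
        div_le_div_of_nonneg_left (by positivity) (by positivity)
          (sqrt_le_sqrt (rayleigh_frequency_sq_le hσ hm hL₀ hLL.le))
    _ = 4 * √(m / (2 * σ)) * (π / 2 / √(f y₀)) := by
        rw [hf_y₀, four_mul_sqrt_mul_pi_div_two_div_sqrt hσ hm hA]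
    _ ≤ _ := by
        gcongr
        exact pi_div_two_div_sqrt_le_integral hy₀ hf_mono hf₀
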